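/- Suppose (U^n) and (V^n) both solve the explicit upwind scheme (with the same f⁺, f⁻, δ) and the CFL condition holds with bounds L⁺, L⁻. Assume that for every n ∈ ℕ the sequence j ↦ |U^n_j − V^n_j| is summable over ℤ. Then the scheme is ℓ¹ contracting: for every n ∈ ℕ, Σ_{j∈ℤ} |U^n_j − V^n_j| ≤ Σ_{j∈ℤ} |U^0_j − V^0_j|. -/

import Mathlib

/-!
Write `W^n = U^n - V^n`. The CFL condition makes `y ↦ c^{n+1}_n y - δ f⁺(y) + δ f⁻(y)`
nondecreasing, and `f⁺`, `-f⁻` are nondecreasing, so in the difference of the two schemes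
each contribution of `W^n` to `W^{n+1}` enters with a nonnegative weight; the weights leaving
a cell are recovered by its neighbours, so summing over `j` gives
`‖W^{n+1}‖₁ ≤ ∑ₖ c^{n+1}_k ‖W^k‖₁`. The coefficients are nonnegative (concavity of
`t ↦ t^{1-α}`) and sum to `1` (telescoping), hence `‖W^n‖₁ ≤ ‖W^0‖₁` by strong induction.
-/

open scoped BigOperators

/-- The L1 coefficients `c^{n+1}_k` for the discrete Caputo derivative:
`c^{n+1}_0 = (n+1)^{1-α} - n^{1-α}` and, for `1 ≤ k ≤ n`,
`c^{n+1}_k = 2(n+1-k)^{1-α} - (n+2-k)^{1-α} - (n-k)^{1-α}`. -/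
noncomputable def caputoCoeff (α : ℝ) (n k : ℕ) : ℝ :=
  if k = 0 then ((n : ℝ) + 1) ^ (1 - α) - (n : ℝ) ^ (1 - α)
  else 2 * ((n : ℝ) + 1 - (k : ℝ)) ^ (1 - α) - ((n : ℝ) + 2 - (k : ℝ)) ^ (1 - α)
    - ((n : ℝ) - (k : ℝ)) ^ (1 - α)

/-- `U` solves the explicit upwind scheme with time steps indexed by `ℕ`
and space indexed by `ℤ`. -/
def SolvesExplicitScheme (α δ : ℝ) (fp fm : ℝ → ℝ) (U : ℕ → ℤ → ℝ) : Prop :=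
  ∀ (n : ℕ) (j : ℤ),
    U (n + 1) j = (∑ k ∈ Finset.range (n + 1), caputoCoeff α n k * U k j)
      - δ * (fp (U n j) - fp (U n (j - 1)))
      - δ * (fm (U n (j + 1)) - fm (U n j))

/-- The CFL condition with bounds `Lp, Lm`:
`(f⁺)' ≤ Lp`, `(f⁻)' ≥ -Lm` and `δ (Lp + Lm) ≤ 2 - 2^{1-α}`. -/
def CFLCondition (α δ Lp Lm : ℝ) (fp fm : ℝ → ℝ) : Prop :=
  0 ≤ Lp ∧ 0 ≤ Lm ∧ (∀ x, deriv fp x ≤ Lp) ∧ (∀ x, -Lm ≤ deriv fm x) ∧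
    δ * (Lp + Lm) ≤ 2 - (2 : ℝ) ^ (1 - α)

open Finset

lemma caputoCoeff_nonneg {α : ℝ} (hα : α ∈ Set.Icc (0 : ℝ) 1) {n k : ℕ} (hk : k ≤ n) :
    0 ≤ caputoCoeff α n k := by
  have hp0 : (0 : ℝ) ≤ 1 - α := by linarith [hα.2]
  unfold caputoCoeff
  split_ifs with hk0
  · have := Real.rpow_le_rpow n.cast_nonneg (le_add_of_nonneg_right zero_le_one) hp0
    linarith
  · have hkn : (k : ℝ) ≤ n := by exact_mod_cast hk
    have hmid := (Real.concaveOn_rpow hp0 (by linarith [hα.1])).2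
      (Set.mem_Ici.2 (sub_nonneg.2 hkn)) (Set.mem_Ici.2 (by linarith : (0 : ℝ) ≤ n + 2 - k))
      (by norm_num : (0 : ℝ) ≤ 1 / 2) (by norm_num : (0 : ℝ) ≤ 1 / 2) (by norm_num)
    simp only [smul_eq_mul] at hmid
    rw [show 1 / 2 * ((n : ℝ) - k) + 1 / 2 * (n + 2 - k) = n + 1 - k by ring] at hmid
    linarith

lemma sum_caputoCoeff {α : ℝ} (hα : α ≠ 1) (n : ℕ) :
    ∑ k ∈ range (n + 1), caputoCoeff α n k = 1 := by
  set D : ℕ → ℝ := fun k => ((n : ℝ) + 1 - k) ^ (1 - α) - ((n : ℝ) - k) ^ (1 - α)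
  have hstep (k : ℕ) : caputoCoeff α n (k + 1) = D (k + 1) - D k := by
    simp only [caputoCoeff, D, if_neg k.succ_ne_zero]
    push_cast
    rw [show (n : ℝ) + 1 - (k + 1) = n - k by ring, show (n : ℝ) + 2 - (k + 1) = n + 1 - k by ring]
    ring
  have hD0 : D 0 = caputoCoeff α n 0 := by simp [D, caputoCoeff]
  have hDn : D n = 1 := by
    simp [D, Real.zero_rpow (sub_ne_zero.2 hα.symm)]
  rw [sum_range_succ', sum_congr rfl fun k _ => hstep k, sum_range_sub, hD0, hDn]
  ring

lemma two_sub_le_caputoCoeff_self {α : ℝ} (hα : α < 1) (n : ℕ) :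
    2 - (2 : ℝ) ^ (1 - α) ≤ caputoCoeff α n n := by
  have hpne : (1 : ℝ) - α ≠ 0 := by linarith
  rcases n with _ | n
  · have : (1 : ℝ) ≤ 2 ^ (1 - α) := Real.one_le_rpow one_le_two (by linarith)
    simp only [caputoCoeff, ↓reduceIte, Nat.cast_zero, zero_add, Real.one_rpow,
      Real.zero_rpow hpne, sub_zero]
    linarith
  · simp [caputoCoeff, Real.zero_rpow hpne]

lemma le_apply_zero_of_le_convex_comb {m : ℕ → ℝ} {c : ℕ → ℕ → ℝ}
    (hc : ∀ n k, k ≤ n → 0 ≤ c n k) (hc1 : ∀ n, ∑ k ∈ range (n + 1), c n k = 1)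
    (hm : ∀ n, m (n + 1) ≤ ∑ k ∈ range (n + 1), c n k * m k) (n : ℕ) : m n ≤ m 0 := by
  induction n using Nat.strong_induction_on with
  | _ n ih =>
    rcases n with _ | n
    · rfl
    calc m (n + 1) ≤ ∑ k ∈ range (n + 1), c n k * m k := hm n
      _ ≤ ∑ k ∈ range (n + 1), c n k * m 0 := by
        gcongr with k hk
        · exact hc n k (Nat.lt_succ_iff.1 (mem_range.1 hk))
        · exact ih k (mem_range.1 hk)
      _ = m 0 := by rw [← sum_mul, hc1, one_mul]

lemma HasSum.sub_sub_add_shift_add_shift {x a b : ℤ → ℝ} {s : ℝ} (hx : HasSum x s)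
    (ha : Summable a) (hb : Summable b) :
    HasSum (fun j => x j - a j - b j + a (j - 1) + b (j + 1)) s := by
  have ha' : HasSum (fun j => a (j - 1)) (∑' j, a j) := (Equiv.subRight 1).hasSum_iff.2 ha.hasSum
  have hb' : HasSum (fun j => b (j + 1)) (∑' j, b j) := (Equiv.addRight 1).hasSum_iff.2 hb.hasSum
  convert (((hx.sub ha.hasSum).sub hb.hasSum).add ha').add hb' using 1
  · ext j; ring
  · ring

lemma monotone_mul_sub_mul_add_mul {c δ Lp Lm : ℝ} {fp fm : ℝ → ℝ}
    (hfp : Differentiable ℝ fp) (hfm : Differentiable ℝ fm)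
    (hfpL : ∀ x, deriv fp x ≤ Lp) (hfmL : ∀ x, -Lm ≤ deriv fm x) (hδ : 0 ≤ δ)
    (hc : δ * (Lp + Lm) ≤ c) : Monotone fun y => c * y - δ * fp y + δ * fm y := by
  intro x y hxy
  have hp := mul_le_mul_of_nonneg_left (image_sub_le_mul_sub_of_deriv_le hfp hfpL hxy) hδ
  have hm := mul_le_mul_of_nonneg_left (mul_sub_le_image_sub_of_le_deriv hfm hfmL hxy) hδ
  have hgap := mul_nonneg (sub_nonneg.2 hc) (sub_nonneg.2 hxy)
  dsimp only
  linarith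

lemma abs_upwind_sub_add_abs_add_abs {c δ : ℝ} {fp fm : ℝ → ℝ}
    (hfp : Monotone fp) (hfm : Antitone fm) (hg : Monotone fun y => c * y - δ * fp y + δ * fm y)
    (u v : ℝ) :
    |c * (u - v) - δ * (fp u - fp v) + δ * (fm u - fm v)| + δ * |fp u - fp v|
      + δ * |fm u - fm v| = c * |u - v| := by
  have hgd (x y : ℝ) : c * (x - y) - δ * (fp x - fp y) + δ * (fm x - fm y)
      = (c * x - δ * fp x + δ * fm x) - (c * y - δ * fp y + δ * fm y) := by ring
  rcases le_total v u with h | h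
  · rw [abs_of_nonneg (sub_nonneg.2 h), abs_of_nonneg (sub_nonneg.2 (hfp h)),
      abs_of_nonpos (sub_nonpos.2 (hfm h)), hgd, abs_of_nonneg (sub_nonneg.2 (hg h))]
    ring
  · rw [abs_of_nonpos (sub_nonpos.2 h), abs_of_nonpos (sub_nonpos.2 (hfp h)),
      abs_of_nonneg (sub_nonneg.2 (hfm h)), hgd, abs_of_nonpos (sub_nonpos.2 (hg h))]
    ring

lemma tsum_abs_le_of_upwind_step {c δ : ℝ} {w w' r P M : ℤ → ℝ}
    (hstep : ∀ j, w' j = r j + (c * w j - δ * P j + δ * M j) + δ * P (j - 1) - δ * M (j + 1))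
    (hsplit : ∀ j, |c * w j - δ * P j + δ * M j| + δ * |P j| + δ * |M j| = c * |w j|)
    (hδ : 0 ≤ δ) (hw : Summable fun j => |w j|) (hr : Summable fun j => |r j|) :
    ∑' j, |w' j| ≤ ∑' j, |r j| + c * ∑' j, |w j| := by
  set a : ℤ → ℝ := fun j => δ * |P j|
  set b : ℤ → ℝ := fun j => δ * |M j|
  have ha0 (j : ℤ) : 0 ≤ a j := mul_nonneg hδ (abs_nonneg _)
  have hb0 (j : ℤ) : 0 ≤ b j := mul_nonneg hδ (abs_nonneg _)
  have hcw : Summable fun j => c * |w j| := hw.mul_left c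
  have ha : Summable a := hcw.of_nonneg_of_le ha0 fun j => by
    linarith [hsplit j, abs_nonneg (c * w j - δ * P j + δ * M j), hb0 j]
  have hb : Summable b := hcw.of_nonneg_of_le hb0 fun j => by
    linarith [hsplit j, abs_nonneg (c * w j - δ * P j + δ * M j), ha0 j]
  have hbound (j : ℤ) :
      |w' j| ≤ |r j| + (c * |w j| - a j - b j + a (j - 1) + b (j + 1)) := by
    have hP := abs_mul δ (P (j - 1))
    have hM := abs_mul δ (M (j + 1))
    rw [abs_of_nonneg hδ] at hP hM
    rw [hstep]
    linarith [hsplit j, abs_add_three (r j) (c * w j - δ * P j + δ * M j) (δ * P (j - 1)),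
      abs_sub (r j + (c * w j - δ * P j + δ * M j) + δ * P (j - 1)) (δ * M (j + 1))]
  have hstencil : HasSum (fun j => c * |w j| - a j - b j + a (j - 1) + b (j + 1))
      (c * ∑' j, |w j|) :=
    (hw.hasSum.mul_left c).sub_sub_add_shift_add_shift ha hb
  have hw' : Summable fun j => |w' j| :=
    (hr.add hstencil.summable).of_nonneg_of_le (fun j => abs_nonneg _) hbound
  calc ∑' j, |w' j| ≤ ∑' j, (|r j| + (c * |w j| - a j - b j + a (j - 1) + b (j + 1))) :=
        hw'.tsum_le_tsum hbound (hr.add hstencil.summable)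
    _ = ∑' j, |r j| + c * ∑' j, |w j| := by rw [hr.tsum_add hstencil.summable, hstencil.tsum_eq]

namespace SolvesExplicitScheme

variable {α δ : ℝ} {fp fm : ℝ → ℝ} {U V : ℕ → ℤ → ℝ}

lemma sub_succ (hU : SolvesExplicitScheme α δ fp fm U) (hV : SolvesExplicitScheme α δ fp fm V)
    (n : ℕ) (j : ℤ) :
    U (n + 1) j - V (n + 1) j =
      ∑ k ∈ range n, caputoCoeff α n k * (U k j - V k j)
        + (caputoCoeff α n n * (U n j - V n j) - δ * (fp (U n j) - fp (V n j))
          + δ * (fm (U n j) - fm (V n j)))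
        + δ * (fp (U n (j - 1)) - fp (V n (j - 1)))
        - δ * (fm (U n (j + 1)) - fm (V n (j + 1))) := by
  rw [hU, hV, sum_range_succ, sum_range_succ]
  simp only [mul_sub, sum_sub_distrib]
  ring

lemma tsum_abs_sub_succ_le (hU : SolvesExplicitScheme α δ fp fm U)
    (hV : SolvesExplicitScheme α δ fp fm V) (hα : α ∈ Set.Icc (0 : ℝ) 1) (hδ : 0 ≤ δ)
    (hfp : Monotone fp) (hfm : Antitone fm) {n : ℕ}
    (hg : Monotone fun y => caputoCoeff α n n * y - δ * fp y + δ * fm y)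
    (hsum : ∀ k, Summable fun j => |U k j - V k j|) :
    ∑' j, |U (n + 1) j - V (n + 1) j|
      ≤ ∑ k ∈ range (n + 1), caputoCoeff α n k * ∑' j, |U k j - V k j| := by
  have hc (k : ℕ) (hk : k ∈ range n) : 0 ≤ caputoCoeff α n k :=
    caputoCoeff_nonneg hα (mem_range.1 hk).le
  have hhist (j : ℤ) : |∑ k ∈ range n, caputoCoeff α n k * (U k j - V k j)|
      ≤ ∑ k ∈ range n, caputoCoeff α n k * |U k j - V k j| := by
    refine (abs_sum_le_sum_abs _ _).trans_eq (sum_congr rfl fun k hk => ?_)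
    rw [abs_mul, abs_of_nonneg (hc k hk)]
  have hhist_sum : Summable fun j => ∑ k ∈ range n, caputoCoeff α n k * |U k j - V k j| :=
    summable_sum fun k _ => (hsum k).mul_left _
  have hr : Summable fun j => |∑ k ∈ range n, caputoCoeff α n k * (U k j - V k j)| :=
    hhist_sum.of_nonneg_of_le (fun j => abs_nonneg _) hhist
  calc ∑' j, |U (n + 1) j - V (n + 1) j|
      ≤ ∑' j, |∑ k ∈ range n, caputoCoeff α n k * (U k j - V k j)|
        + caputoCoeff α n n * ∑' j, |U n j - V n j| :=
        tsum_abs_le_of_upwind_step (hU.sub_succ hV n)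
          (fun j => abs_upwind_sub_add_abs_add_abs hfp hfm hg _ _) hδ (hsum n) hr
    _ ≤ ∑ k ∈ range n, caputoCoeff α n k * ∑' j, |U k j - V k j|
        + caputoCoeff α n n * ∑' j, |U n j - V n j| := by
      gcongr
      calc _ ≤ ∑' j, ∑ k ∈ range n, caputoCoeff α n k * |U k j - V k j| :=
            hr.tsum_le_tsum hhist hhist_sum
        _ = _ := by
          rw [Summable.tsum_finsetSum fun k _ => (hsum k).mul_left _]
          simp only [tsum_mul_left]
    _ = _ := (sum_range_succ _ n).symm

end SolvesExplicitScheme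

/-- the explicit upwind scheme is `ℓ¹` contracting under the CFL
condition: `Σ_j |U^n_j - V^n_j| ≤ Σ_j |U^0_j - V^0_j|` for every `n`. -/
theorem explicit_upwind_l1_contracting (α τ h : ℝ) (hα : α ∈ Set.Ioo (0 : ℝ) 1)
    (hτ : 0 < τ) (hh : 0 < h) (δ : ℝ) (hδ : δ = τ ^ α / (h * Real.Gamma (2 - α)))
    (fp fm : ℝ → ℝ) (hfp : Differentiable ℝ fp) (hfm : Differentiable ℝ fm)
    (hfp' : ∀ x, 0 ≤ deriv fp x) (hfm' : ∀ x, deriv fm x ≤ 0)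
    (U V : ℕ → ℤ → ℝ)
    (hU : SolvesExplicitScheme α δ fp fm U) (hV : SolvesExplicitScheme α δ fp fm V)
    (Lp Lm : ℝ) (hcfl : CFLCondition α δ Lp Lm fp fm)
    (hsum : ∀ n : ℕ, Summable (fun j : ℤ => |U n j - V n j|)) :
    ∀ n : ℕ, ∑' j : ℤ, |U n j - V n j| ≤ ∑' j : ℤ, |U 0 j - V 0 j| := by
  obtain ⟨-, -, hfpL, hfmL, hCFL⟩ := hcfl
  have hα' : α ∈ Set.Icc (0 : ℝ) 1 := Set.Ioo_subset_Icc_self hα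
  have hδ0 : 0 ≤ δ := by
    rw [hδ]
    have := Real.Gamma_pos_of_pos (by linarith [hα.2] : (0 : ℝ) < 2 - α)
    positivity
  have hg (n : ℕ) : Monotone fun y => caputoCoeff α n n * y - δ * fp y + δ * fm y :=
    monotone_mul_sub_mul_add_mul hfp hfm hfpL hfmL hδ0
      (hCFL.trans (two_sub_le_caputoCoeff_self hα.2 n))
  exact le_apply_zero_of_le_convex_comb (fun n k hk => caputoCoeff_nonneg hα' hk)
    (sum_caputoCoeff hα.2.ne)
    (fun n => hU.tsum_abs_sub_succ_le hV hα' hδ0 (monotone_of_deriv_nonneg hfp hfp')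
      (antitone_of_deriv_nonpos hfm hfm') (hg n) hsum)
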